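/- arXiv:2605.18185 — 7 statements merged into one kernel-verified Lean document; each statement's English description precedes it below -/
import Mathlib

section
/- Let Y be a random variable on [0,1], and define recursively g¹(y) = y − E[Y] and g^{h+1}(y) = y·g^h(y) − E[Y·g^h(Y)]. Then for all natural numbers m, n ≥ 1, E[Y·g^m(Y)·g^n(Y)] = E[Y·g^{m+n}(Y)]. -/
open MeasureTheory

theorem stmt1 (ρ : Measure ℝ) [IsProbabilityMeasure ρ]
    (hsupp : ∀ᵐ y ∂ρ, y ∈ Set.Icc (0:ℝ) 1)
    (g : ℕ → ℝ → ℝ)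
    (hg1 : ∀ y, g 1 y = y - ∫ z, z ∂ρ)
    (hrec : ∀ h : ℕ, 1 ≤ h → ∀ y, g (h+1) y = y * g h y - ∫ z, z * g h z ∂ρ)
    (m n : ℕ) (hm : 1 ≤ m) (hn : 1 ≤ n) :
    ∫ y, y * g m y * g n y ∂ρ = ∫ y, y * g (m+n) y ∂ρ := by
  have hint : ∀ f : ℝ → ℝ, Continuous f → Integrable f ρ := by
    intro f hf
    obtain ⟨C, hC⟩ := (isCompact_Icc : IsCompact (Set.Icc (0:ℝ) 1)).exists_bound_of_continuousOn
      hf.continuousOn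
    exact (integrable_const C).mono' hf.aestronglyMeasurable
      (hsupp.mono fun y hy => by simpa using hC y hy)
  have hcont : ∀ h, 1 ≤ h → Continuous (g h) := by
    intro h hh
    induction hh with
    | refl =>
      have e : g 1 = fun y => y - ∫ z, z ∂ρ := funext hg1
      rw [e]; exact continuous_id.sub continuous_const
    | @step k hk ih =>
      have e : g (k+1) = fun y => y * g k y - ∫ z, z * g k z ∂ρ := funext (hrec k hk)
      rw [e]; exact (continuous_id.mul ih).sub continuous_const
  have key : ∀ n, 1 ≤ n → ∀ m, 1 ≤ m →
      ∫ y, y * g m y * g n y ∂ρ = ∫ y, y * g (m+n) y ∂ρ := by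
    intro n hn
    induction hn with
    | refl =>
      intro m hm
      have hgm := hcont m hm
      have hgm1 := hcont (m+1) (by omega)
      have e1 : ∀ y : ℝ, y * g m y * g 1 y
          = y * g (m+1) y + (∫ z, z * g m z ∂ρ) * y
            - (∫ z, z ∂ρ) * (y * g m y) := by
        intro y
        rw [hg1 y, hrec m hm y]; ring
      have iA : Integrable (fun y => y * g (m+1) y) ρ :=
        hint _ (continuous_id.mul hgm1)
      have iB : Integrable (fun y => (∫ z, z * g m z ∂ρ) * y) ρ :=
        hint _ (continuous_const.mul continuous_id)
      have iC : Integrable (fun y => (∫ z, z ∂ρ) * (y * g m y)) ρ :=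
        hint _ (continuous_const.mul (continuous_id.mul hgm))
      have iAB : Integrable (fun y => y * g (m+1) y + (∫ z, z * g m z ∂ρ) * y) ρ := iA.add iB
      calc ∫ y, y * g m y * g 1 y ∂ρ
          = ∫ y, (y * g (m+1) y + (∫ z, z * g m z ∂ρ) * y
              - (∫ z, z ∂ρ) * (y * g m y)) ∂ρ := by
            exact integral_congr_ae (Filter.Eventually.of_forall e1)
        _ = (∫ y, y * g (m+1) y ∂ρ) + (∫ y, (∫ z, z * g m z ∂ρ) * y ∂ρ)
              - ∫ y, (∫ z, z ∂ρ) * (y * g m y) ∂ρ := by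
            rw [integral_sub iAB iC, integral_add iA iB]
        _ = ∫ y, y * g (m+1) y ∂ρ := by
            rw [integral_const_mul, integral_const_mul]; ring
    | @step k hk ih =>
      intro m hm
      have hgm := hcont m hm
      have hgm1 := hcont (m+1) (by omega)
      have hgk := hcont k hk
      have e1 : ∀ y : ℝ, y * g m y * g (k+1) y
          = y * g (m+1) y * g k y + (∫ z, z * g m z ∂ρ) * (y * g k y)
            - (∫ z, z * g k z ∂ρ) * (y * g m y) := by
        intro y
        rw [hrec k hk y, hrec m hm y]; ring
      have iA : Integrable (fun y => y * g (m+1) y * g k y) ρ :=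
        hint _ ((continuous_id.mul hgm1).mul hgk)
      have iB : Integrable (fun y => (∫ z, z * g m z ∂ρ) * (y * g k y)) ρ :=
        hint _ (continuous_const.mul (continuous_id.mul hgk))
      have iC : Integrable (fun y => (∫ z, z * g k z ∂ρ) * (y * g m y)) ρ :=
        hint _ (continuous_const.mul (continuous_id.mul hgm))
      have iAB : Integrable
          (fun y => y * g (m+1) y * g k y + (∫ z, z * g m z ∂ρ) * (y * g k y)) ρ := iA.add iB
      calc ∫ y, y * g m y * g (k+1) y ∂ρ
          = ∫ y, (y * g (m+1) y * g k y + (∫ z, z * g m z ∂ρ) * (y * g k y)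
              - (∫ z, z * g k z ∂ρ) * (y * g m y)) ∂ρ := by
            exact integral_congr_ae (Filter.Eventually.of_forall e1)
        _ = (∫ y, y * g (m+1) y * g k y ∂ρ)
              + (∫ y, (∫ z, z * g m z ∂ρ) * (y * g k y) ∂ρ)
              - ∫ y, (∫ z, z * g k z ∂ρ) * (y * g m y) ∂ρ := by
            rw [integral_sub iAB iC, integral_add iA iB]
        _ = (∫ y, y * g (m+1+k) y ∂ρ)
              + (∫ z, z * g m z ∂ρ) * (∫ y, y * g k y ∂ρ)
              - (∫ z, z * g k z ∂ρ) * (∫ y, y * g m y ∂ρ) := by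
            rw [ih (m+1) (by omega), integral_const_mul, integral_const_mul]
        _ = ∫ y, y * g (m+(k+1)) y ∂ρ := by
            have : m + 1 + k = m + (k + 1) := by omega
            rw [this]; ring
  exact key n hn m hm
end

section
/- Let Y be a random variable on [0,1] and define g^h recursively by g¹(y) = y − E[Y], g^{h+1}(y) = y·g^h(y) − E[Y·g^h(Y)]. Then for every even index h = 2l with l ≥ 1, E[Y·g^{2l}(Y)] = E[Y·(g^l(Y))²] ≥ 0. -/
open MeasureTheory

theorem stmt2 (ρ : Measure ℝ) [IsProbabilityMeasure ρ]
    (hsupp : ∀ᵐ y ∂ρ, y ∈ Set.Icc (0:ℝ) 1)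
    (g : ℕ → ℝ → ℝ)
    (hg1 : ∀ y, g 1 y = y - ∫ z, z ∂ρ)
    (hrec : ∀ h : ℕ, 1 ≤ h → ∀ y, g (h+1) y = y * g h y - ∫ z, z * g h z ∂ρ)
    (l : ℕ) (hl : 1 ≤ l) :
    (∫ y, y * g (2*l) y ∂ρ = ∫ y, y * (g l y)^2 ∂ρ) ∧
      0 ≤ ∫ y, y * g (2*l) y ∂ρ := by
  -- continuity of each g h, h ≥ 1
  have hcont : ∀ h, 1 ≤ h → Continuous (g h) := by
    intro h hh
    induction h with
    | zero => omega
    | succ n ih =>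
      rcases Nat.lt_or_ge n 1 with h1 | h1
      · have hn0 : n = 0 := by omega
        subst hn0
        have : g 1 = fun y => y - ∫ z, z ∂ρ := funext hg1
        rw [this]
        exact continuous_id.sub continuous_const
      · have hc := ih h1
        have : g (n+1) = fun y => y * g n y - ∫ z, z * g n z ∂ρ :=
          funext (hrec n h1)
        rw [this]
        exact (continuous_id.mul hc).sub continuous_const
  -- every continuous function is integrable w.r.t. ρ
  have hint : ∀ f : ℝ → ℝ, Continuous f → Integrable f ρ := by
    intro f hf
    obtain ⟨C, hC⟩ :=
      (isCompact_Icc (a := (0:ℝ)) (b := 1)).exists_bound_of_continuousOn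
        hf.continuousOn
    refine Integrable.mono' (integrable_const C) hf.aestronglyMeasurable ?_
    filter_upwards [hsupp] with y hy
    exact hC y hy
  -- ∫ g h = 0 for h ≥ 1
  have hzero : ∀ h, 1 ≤ h → ∫ y, g h y ∂ρ = 0 := by
    intro h hh
    match h, hh with
    | 1, _ =>
      simp only [hg1]
      rw [integral_sub (hint (fun y : ℝ => y) continuous_id) (integrable_const _), integral_const]
      simp
    | (n+2), _ =>
      have hn : 1 ≤ n + 1 := by omega
      simp only [hrec (n+1) hn]
      rw [integral_sub (hint (fun y => y * g (n+1) y) (continuous_id.mul (hcont _ hn))) (integrable_const _),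
        integral_const]
      simp
  -- key: ∫ g (c+1) * g d = ∫ y * g c * g d
  have key : ∀ c d : ℕ, 1 ≤ c → 1 ≤ d →
      ∫ y, g (c+1) y * g d y ∂ρ = ∫ y, y * g c y * g d y ∂ρ := by
    intro c d hc hd
    have hc' := hcont c hc
    have hd' := hcont d hd
    have hpt : ∀ y, g (c+1) y * g d y
        = y * g c y * g d y - (∫ z, z * g c z ∂ρ) * g d y := by
      intro y; rw [hrec c hc]; ring
    simp only [hpt]
    rw [integral_sub (hint (fun y => y * g c y * g d y) ((continuous_id.mul hc').mul hd'))
        (hint (fun y => (∫ z, z * g c z ∂ρ) * g d y) (continuous_const.mul hd')),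
      integral_const_mul, hzero d hd, mul_zero, sub_zero]
  -- shift lemma
  have hshift : ∀ a b, 1 ≤ a → 1 ≤ b →
      ∫ y, g (a+1) y * g b y ∂ρ = ∫ y, g a y * g (b+1) y ∂ρ := by
    intro a b ha hb
    rw [key a b ha hb]
    have h2 := key b a hb ha
    calc ∫ y, y * g a y * g b y ∂ρ
        = ∫ y, y * g b y * g a y ∂ρ :=
          integral_congr_ae (Filter.Eventually.of_forall fun y => by ring)
      _ = ∫ y, g (b+1) y * g a y ∂ρ := h2.symm
      _ = ∫ y, g a y * g (b+1) y ∂ρ :=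
          integral_congr_ae (Filter.Eventually.of_forall fun y => by ring)
  -- iterated shift
  have hshiftk : ∀ k a b, 1 ≤ a → 1 ≤ b →
      ∫ y, g (a+k) y * g b y ∂ρ = ∫ y, g a y * g (b+k) y ∂ρ := by
    intro k
    induction k with
    | zero => intro a b _ _; simp
    | succ n ih =>
      intro a b ha hb
      have e : a + (n+1) = (a+n) + 1 := by omega
      rw [e, hshift (a+n) b (by omega) hb, ih a (b+1) ha (by omega),
        show b + 1 + n = b + (n+1) from by omega]
  have h2l : 1 ≤ 2 * l := by omega
  have e1 : ∫ y, y * g (2*l) y ∂ρ = ∫ y, g 1 y * g (2*l) y ∂ρ := by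
    have hpt : ∀ y, y * g (2*l) y
        = g 1 y * g (2*l) y + (∫ z, z ∂ρ) * g (2*l) y := by
      intro y; rw [hg1]; ring
    simp only [hpt]
    rw [integral_add (hint (fun y => g 1 y * g (2*l) y) ((hcont 1 le_rfl).mul (hcont _ h2l)))
        (hint (fun y => (∫ z, z ∂ρ) * g (2*l) y) (continuous_const.mul (hcont _ h2l))),
      integral_const_mul, hzero _ h2l, mul_zero, add_zero]
  have e2 : ∫ y, g l y * g (l+1) y ∂ρ = ∫ y, g 1 y * g (2*l) y ∂ρ := by
    have h := hshiftk (l-1) 1 (l+1) le_rfl (by omega)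
    rw [show 1 + (l-1) = l from by omega, show l + 1 + (l-1) = 2*l from by omega] at h
    exact h
  have e3 : ∫ y, g l y * g (l+1) y ∂ρ = ∫ y, y * (g l y)^2 ∂ρ := by
    have hpt : ∀ y, g l y * g (l+1) y
        = y * (g l y)^2 - (∫ z, z * g l z ∂ρ) * g l y := by
      intro y; rw [hrec l hl]; ring
    simp only [hpt]
    rw [integral_sub (hint (fun y => y * (g l y)^2) (continuous_id.mul ((hcont l hl).pow 2)))
        (hint (fun y => (∫ z, z * g l z ∂ρ) * g l y) (continuous_const.mul (hcont l hl))),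
      integral_const_mul, hzero l hl, mul_zero, sub_zero]
  have emain : ∫ y, y * g (2*l) y ∂ρ = ∫ y, y * (g l y)^2 ∂ρ := by
    rw [e1, ← e2, e3]
  refine ⟨emain, ?_⟩
  rw [emain]
  refine integral_nonneg_of_ae ?_
  filter_upwards [hsupp] with y hy
  exact mul_nonneg hy.1 (sq_nonneg _)
end

section
/- Let Y be a random variable on [0,1] and define g^h recursively by g¹(y) = y − E[Y], g^{h+1}(y) = y·g^h(y) − E[Y·g^h(Y)]. Then for every odd index h = 2l+1 with l ≥ 1, E[Y·g^{2l+1}(Y)] = E[(Y·g^l(Y))²] − (E[Y·g^l(Y)])² ≥ 0. -/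
/-!
Put `g⁰ = 1`, so that `g^{h+1}(y) = y g^h(y) - E[Y g^h(Y)]` for all `h ≥ 0`. For the form
`B(h, k) = E[Y g^h(Y) g^k(Y)]` this recursion gives
`B(h+1, k) = E[Y² g^h g^k] - E[Y g^h] E[Y g^k]`, which is symmetric in `h` and `k`, so
`B(h+1, k) = B(h, k+1)`. Moving `l` factors across,
`E[Y g^{2l+1}] = B(2l+1, 0) = B(l+1, l) = E[(Y g^l)²] - E[Y g^l]²`, the variance of `Y g^l(Y)`.
-/

open MeasureTheory ProbabilityTheory

theorem Continuous.integrable_of_ae_mem_isCompact {X E : Type*} [TopologicalSpace X] [T2Space X]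
    [MeasurableSpace X] [OpensMeasurableSpace X] [NormedAddCommGroup E]
    {μ : Measure X} [IsFiniteMeasureOnCompacts μ] {K : Set X} (hK : IsCompact K)
    (hμK : ∀ᵐ x ∂μ, x ∈ K) {f : X → E} (hf : Continuous f) : Integrable f μ := by
  rw [← Measure.restrict_eq_self_of_ae_mem hμK]
  exact hf.continuousOn.integrableOn_compact hK

def IsMomentRecursion (μ : Measure ℝ) (G : ℕ → ℝ → ℝ) : Prop :=
  ∀ h y, G (h + 1) y = y * G h y - ∫ z, z * G h z ∂μ

namespace IsMomentRecursion

variable {μ : Measure ℝ} {G : ℕ → ℝ → ℝ}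

theorem continuous (hG : IsMomentRecursion μ G) (hG₀ : Continuous (G 0)) (h : ℕ) :
    Continuous (G h) := by
  induction h with
  | zero => exact hG₀
  | succ h ih =>
    rw [funext (hG h)]
    exact (continuous_id.mul ih).sub continuous_const

theorem integral_mul_succ_mul (hG : IsMomentRecursion μ G) (h : ℕ) {φ : ℝ → ℝ}
    (hφ₂ : Integrable (fun y => y ^ 2 * G h y * φ y) μ) (hφ₁ : Integrable (fun y => y * φ y) μ) :
    ∫ y, y * G (h + 1) y * φ y ∂μ
      = ∫ y, y ^ 2 * G h y * φ y ∂μ - (∫ z, z * G h z ∂μ) * ∫ y, y * φ y ∂μ := by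
  have hexpand : (fun y => y * G (h + 1) y * φ y)
      = fun y => y ^ 2 * G h y * φ y - (∫ z, z * G h z ∂μ) * (y * φ y) := by
    funext y
    rw [hG]
    ring
  rw [hexpand, integral_sub hφ₂ (hφ₁.const_mul _), integral_const_mul]

variable [IsFiniteMeasure μ] {K : Set ℝ}

theorem integral_mul_succ_mul_eq_mul_mul_succ (hG : IsMomentRecursion μ G)
    (hG₀ : Continuous (G 0)) (hK : IsCompact K) (hμK : ∀ᵐ y ∂μ, y ∈ K) (h k : ℕ) :
    ∫ y, y * G (h + 1) y * G k y ∂μ = ∫ y, y * G h y * G (k + 1) y ∂μ := by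
  have hcont := hG.continuous hG₀
  have hint {f : ℝ → ℝ} (hf : Continuous f) : Integrable f μ :=
    hf.integrable_of_ae_mem_isCompact hK hμK
  rw [hG.integral_mul_succ_mul h (hint (((continuous_pow 2).mul (hcont h)).mul (hcont k)))
      (hint (continuous_id.mul (hcont k)))]
  simp_rw [mul_right_comm _ (G h _) (G (k + 1) _)]
  rw [hG.integral_mul_succ_mul k (hint (((continuous_pow 2).mul (hcont k)).mul (hcont h)))
      (hint (continuous_id.mul (hcont h)))]
  simp_rw [mul_right_comm _ (G k _) (G h _)]
  ring

theorem integral_mul_add_mul_eq_mul_mul_add (hG : IsMomentRecursion μ G)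
    (hG₀ : Continuous (G 0)) (hK : IsCompact K) (hμK : ∀ᵐ y ∂μ, y ∈ K) (h k d : ℕ) :
    ∫ y, y * G (h + d) y * G k y ∂μ = ∫ y, y * G h y * G (k + d) y ∂μ := by
  induction d generalizing k with
  | zero => rfl
  | succ d ih =>
    rw [← add_assoc, hG.integral_mul_succ_mul_eq_mul_mul_succ hG₀ hK hμK, ih, add_assoc,
      add_comm 1 d]

theorem memLp_two_mul (hG : IsMomentRecursion μ G) (hG₀ : Continuous (G 0)) (hK : IsCompact K)
    (hμK : ∀ᵐ y ∂μ, y ∈ K) (l : ℕ) : MemLp (fun y => y * G l y) 2 μ := by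
  have hYG : Continuous fun y => y * G l y := continuous_id.mul (hG.continuous hG₀ l)
  exact (memLp_two_iff_integrable_sq hYG.aestronglyMeasurable).2
    ((hYG.pow 2).integrable_of_ae_mem_isCompact hK hμK)

theorem integral_mul_succ_mul_self (hG : IsMomentRecursion μ G) (hG₀ : Continuous (G 0))
    (hK : IsCompact K) (hμK : ∀ᵐ y ∂μ, y ∈ K) (l : ℕ) :
    ∫ y, y * G (l + 1) y * G l y ∂μ = ∫ y, (y * G l y) ^ 2 ∂μ - (∫ y, y * G l y ∂μ) ^ 2 := by
  have hcont := hG.continuous hG₀ l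
  have hint {f : ℝ → ℝ} (hf : Continuous f) : Integrable f μ :=
    hf.integrable_of_ae_mem_isCompact hK hμK
  rw [hG.integral_mul_succ_mul l (hint (((continuous_pow 2).mul hcont).mul hcont))
      (hint (continuous_id.mul hcont))]
  simp only [sq]
  ring_nf

end IsMomentRecursion

theorem stmt3 (ρ : Measure ℝ) [IsProbabilityMeasure ρ]
    (hsupp : ∀ᵐ y ∂ρ, y ∈ Set.Icc (0:ℝ) 1)
    (g : ℕ → ℝ → ℝ)
    (hg1 : ∀ y, g 1 y = y - ∫ z, z ∂ρ)
    (hrec : ∀ h : ℕ, 1 ≤ h → ∀ y, g (h+1) y = y * g h y - ∫ z, z * g h z ∂ρ)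
    (l : ℕ) (hl : 1 ≤ l) :
    (∫ y, y * g (2*l+1) y ∂ρ
        = (∫ y, (y * g l y)^2 ∂ρ) - (∫ y, y * g l y ∂ρ)^2) ∧
      0 ≤ ∫ y, y * g (2*l+1) y ∂ρ := by
  set G := Function.update g 0 fun _ => 1
  have hG : IsMomentRecursion ρ G := by
    intro h y
    rcases Nat.eq_zero_or_pos h with rfl | hh
    · simp [G, hg1]
    · simp [G, hh.ne', hrec h hh]
  have hGl : G l = g l := Function.update_of_ne (by omega) _ _
  have hmove := hG.integral_mul_add_mul_eq_mul_mul_add continuous_const isCompact_Icc hsupp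
    (l + 1) 0 l
  rw [zero_add, hG.integral_mul_succ_mul_self continuous_const isCompact_Icc hsupp, hGl,
    show l + 1 + l = 2 * l + 1 by omega] at hmove
  have hformula : ∫ y, y * g (2 * l + 1) y ∂ρ
      = ∫ y, (y * g l y) ^ 2 ∂ρ - (∫ y, y * g l y ∂ρ) ^ 2 := by
    simpa [G] using hmove
  refine ⟨hformula, hformula ▸ ?_⟩
  have hvar := variance_eq_sub (hGl ▸ hG.memLp_two_mul continuous_const isCompact_Icc hsupp l)
  simp only [Pi.pow_apply] at hvar
  exact hvar ▸ variance_nonneg _ _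
end

section
/- Let Y be a random variable on [0,1] and define g^h recursively by g¹(y) = y − E[Y], g^{h+1}(y) = y·g^h(y) − E[Y·g^h(Y)]. Then for all h ≥ 1, E[Y·g^h(Y)] ≥ 0. -/
open MeasureTheory

private lemma cs_aux {μ : Measure ℝ} {f g : ℝ → ℝ}
    (hff : Integrable (fun y => f y * f y) μ) (hgg : Integrable (fun y => g y * g y) μ)
    (hfg : Integrable (fun y => f y * g y) μ) :
    (∫ y, f y * g y ∂μ)^2 ≤ (∫ y, f y * f y ∂μ) * (∫ y, g y * g y ∂μ) := by
  set A := ∫ y, f y * f y ∂μ with hA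
  set B := ∫ y, f y * g y ∂μ with hB
  set C := ∫ y, g y * g y ∂μ with hC
  have key : ∀ t : ℝ, 0 ≤ A * (t * t) + (2 * B) * t + C := by
    intro t
    have h1 : (fun y => (t * t) * (f y * f y) + ((2 * t) * (f y * g y) + g y * g y))
        = fun y => (t * f y + g y)^2 := by funext y; ring
    have h2 : 0 ≤ ∫ y, (t * f y + g y)^2 ∂μ := integral_nonneg fun y => sq_nonneg _
    have hint1 : Integrable (fun y => (t * t) * (f y * f y)) μ := hff.const_mul _
    have hint2 : Integrable (fun y => (2 * t) * (f y * g y)) μ := hfg.const_mul _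
    have hint3 : Integrable (fun y => (2 * t) * (f y * g y) + g y * g y) μ := hint2.add hgg
    have e : ∫ y, (t * f y + g y)^2 ∂μ
        = (∫ y, (t * t) * (f y * f y) ∂μ) + ((∫ y, (2 * t) * (f y * g y) ∂μ)
          + ∫ y, g y * g y ∂μ) := by
      rw [← h1, integral_add hint1 hint3, integral_add hint2 hgg]
    rw [e, integral_const_mul, integral_const_mul] at h2
    linarith
  have hd := discrim_le_zero key
  rw [discrim] at hd
  nlinarith [hd]

theorem stmt4 (ρ : Measure ℝ) [IsProbabilityMeasure ρ]
    (hsupp : ∀ᵐ y ∂ρ, y ∈ Set.Icc (0:ℝ) 1)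
    (g : ℕ → ℝ → ℝ)
    (hg1 : ∀ y, g 1 y = y - ∫ z, z ∂ρ)
    (hrec : ∀ h : ℕ, 1 ≤ h → ∀ y, g (h+1) y = y * g h y - ∫ z, z * g h z ∂ρ)
    (h : ℕ) (hh : 1 ≤ h) :
    0 ≤ ∫ y, y * g h y ∂ρ := by
  classical
  set m : ℕ → ℝ := fun k => ∫ y, y ^ k ∂ρ with hm
  have hmk : ∀ k, m k = ∫ y, y ^ k ∂ρ := fun k => rfl
  -- integrability of powers
  have hbound : ∀ k : ℕ, Integrable (fun y : ℝ => y ^ k) ρ := by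
    intro k
    refine (integrable_const (1:ℝ)).mono' (measurable_id.pow_const k).aestronglyMeasurable ?_
    filter_upwards [hsupp] with y hy
    rw [Real.norm_eq_abs, abs_pow]
    have hy1 : |y| ≤ 1 := abs_le.mpr ⟨by linarith [hy.1], hy.2⟩
    calc |y| ^ k ≤ 1 ^ k := pow_le_pow_left₀ (abs_nonneg y) hy1 k
      _ = 1 := one_pow k
  have hm0 : m 0 = 1 := by simp [hmk 0]
  have hmnonneg : ∀ k, 0 ≤ m k := by
    intro k
    rw [hmk]
    refine integral_nonneg_of_ae ?_
    filter_upwards [hsupp] with y hy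
    exact pow_nonneg hy.1 k
  have hmono : ∀ k, m (k+1) ≤ m k := by
    intro k
    rw [hmk, hmk]
    refine integral_mono_ae (hbound (k+1)) (hbound k) ?_
    filter_upwards [hsupp] with y hy
    exact pow_le_pow_of_le_one hy.1 hy.2 (Nat.le_succ k)
  -- log-convexity of moments via Cauchy-Schwarz
  have hCS : ∀ k, m (k+1)^2 ≤ m k * m (k+2) := by
    intro k
    have hfnn : (fun y => Real.sqrt (y^k) * Real.sqrt (y^k)) =ᵐ[ρ] fun y => y^k := by
      filter_upwards [hsupp] with y hy
      exact Real.mul_self_sqrt (pow_nonneg hy.1 k)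
    have hgnn : (fun y => Real.sqrt (y^(k+2)) * Real.sqrt (y^(k+2))) =ᵐ[ρ] fun y => y^(k+2) := by
      filter_upwards [hsupp] with y hy
      exact Real.mul_self_sqrt (pow_nonneg hy.1 (k+2))
    have hfg : (fun y => Real.sqrt (y^k) * Real.sqrt (y^(k+2))) =ᵐ[ρ] fun y => y^(k+1) := by
      filter_upwards [hsupp] with y hy
      rw [← Real.sqrt_mul (pow_nonneg hy.1 k), ← pow_add,
        show k + (k+2) = (k+1)*2 by ring, pow_mul]
      exact Real.sqrt_sq (pow_nonneg hy.1 (k+1))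
    have i1 := (hbound k).congr hfnn.symm
    have i2 := (hbound (k+2)).congr hgnn.symm
    have i3 := (hbound (k+1)).congr hfg.symm
    have hcs := cs_aux i1 i2 i3
    rw [integral_congr_ae hfnn, integral_congr_ae hgnn, integral_congr_ae hfg] at hcs
    rw [hmk (k+1), hmk k, hmk (k+2)]
    exact hcs
  -- the coefficient sequence
  set c : ℕ → ℝ := fun j => if j = 0 then ∫ y, y ∂ρ else ∫ z, z * g j z ∂ρ with hc
  have hc0 : c 0 = m 1 := by simp [hc, hmk 1]
  have hcS : ∀ j, j ≠ 0 → c j = ∫ z, z * g j z ∂ρ := by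
    intro j hj; rw [hc]; simp [hj]
  -- polynomial form of g
  have hP : ∀ k, ∀ y, g (k+1) y = y^(k+1) - ∑ j ∈ Finset.range (k+1), c j * y^(k-j) := by
    intro k
    induction k with
    | zero =>
      intro y
      rw [hg1 y, Finset.sum_range_one]
      simp [hc]
    | succ k ih =>
      intro y
      rw [hrec (k+1) (by omega) y, ← hcS (k+1) (by omega), ih y]
      conv_rhs => rw [Finset.sum_range_succ]
      rw [Nat.sub_self, pow_zero, mul_one, mul_sub, Finset.mul_sum]
      have hs : ∑ j ∈ Finset.range (k+1), (y * (c j * y^(k-j)))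
          = ∑ j ∈ Finset.range (k+1), c j * y^(k+1-j) := by
        refine Finset.sum_congr rfl fun j hj => ?_
        have hj' := Finset.mem_range.mp hj
        rw [show k+1-j = (k-j)+1 by omega, pow_succ]
        ring
      rw [hs]
      ring
  have hQ : ∀ k, ∀ y, y * g (k+1) y = y^(k+2) - ∑ j ∈ Finset.range (k+1), c j * y^(k+1-j) := by
    intro k y
    rw [hP k y, mul_sub, Finset.mul_sum]
    have hs : ∑ j ∈ Finset.range (k+1), (y * (c j * y^(k-j)))
        = ∑ j ∈ Finset.range (k+1), c j * y^(k+1-j) := by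
      refine Finset.sum_congr rfl fun j hj => ?_
      have hj' := Finset.mem_range.mp hj
      rw [show k+1-j = (k-j)+1 by omega, pow_succ]
      ring
    rw [hs]
    ring
  have hI : ∀ k, Integrable (fun y => y * g (k+1) y) ρ := by
    intro k
    have he : (fun y => y * g (k+1) y)
        = fun y => y^(k+2) - ∑ j ∈ Finset.range (k+1), c j * y^(k+1-j) := funext (hQ k)
    rw [he]
    exact (hbound (k+2)).sub
      (integrable_finset_sum _ fun j _ => (hbound (k+1-j)).const_mul (c j))
  have hR : ∀ k, c (k+1) = m (k+2) - ∑ j ∈ Finset.range (k+1), c j * m (k+1-j) := by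
    intro k
    rw [hcS (k+1) (by omega)]
    calc (∫ z, z * g (k+1) z ∂ρ)
        = ∫ z, (z^(k+2) - ∑ j ∈ Finset.range (k+1), c j * z^(k+1-j)) ∂ρ := by
          refine integral_congr_ae (Filter.Eventually.of_forall fun z => ?_)
          exact hQ k z
      _ = (∫ z, z^(k+2) ∂ρ) - ∫ z, (∑ j ∈ Finset.range (k+1), c j * z^(k+1-j)) ∂ρ := by
          exact integral_sub (hbound (k+2))
            (integrable_finset_sum _ fun j _ => (hbound (k+1-j)).const_mul (c j))
      _ = m (k+2) - ∑ j ∈ Finset.range (k+1), c j * m (k+1-j) := by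
          rw [integral_finset_sum _ fun j _ => (hbound (k+1-j)).const_mul (c j)]
          rw [hmk (k+2)]
          congr 1
          refine Finset.sum_congr rfl fun j _ => ?_
          rw [integral_const_mul, hmk (k+1-j)]
  have hR' : ∀ k, m (k+1) = ∑ j ∈ Finset.range (k+1), c j * m (k-j) := by
    intro k
    cases k with
    | zero => simp [hc0, hm0]
    | succ k =>
      rw [Finset.sum_range_succ, Nat.sub_self, hm0, mul_one]
      have := hR k
      linarith
  have hdeg : m 1 = 0 → ∀ k, m (k+1) = 0 := by
    intro h0 k
    induction k with
    | zero => exact h0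
    | succ k ih => exact le_antisymm (ih ▸ hmono (k+1)) (hmnonneg (k+2))
  have hposall : 0 < m 1 → ∀ k, 0 < m k := by
    intro h1
    have key : ∀ k, 0 < m k ∧ 0 < m (k+1) := by
      intro k
      induction k with
      | zero => exact ⟨hm0 ▸ one_pos, h1⟩
      | succ k ih =>
        refine ⟨ih.2, ?_⟩
        nlinarith [hCS k, ih.1, ih.2]
    exact fun k => (key k).1
  have hspan : (∀ k, 0 < m k) → ∀ a b, m (a+1) * m (a+b) ≤ m a * m (a+b+1) := by
    intro hpos a b
    induction b with
    | zero => rw [Nat.add_zero]; exact le_of_eq (mul_comm _ _)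
    | succ b ih =>
      have H1 := mul_le_mul_of_nonneg_left (hCS (a+b)) (hpos (a+1)).le
      have H2 := mul_le_mul_of_nonneg_right ih (hpos (a+b+2)).le
      show m (a+1) * m (a+b+1) ≤ m a * m (a+b+1+1)
      nlinarith [hpos (a+b+1)]
  have hmain : ∀ n, ∀ j, j ≤ n → 0 ≤ c j := by
    intro n
    induction n with
    | zero =>
      intro j hj
      have : j = 0 := Nat.le_zero.mp hj
      subst this
      rw [hc0]; exact hmnonneg 1
    | succ n ih =>
      intro j hj
      by_cases hj' : j ≤ n
      · exact ih j hj'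
      · have hjn : j = n + 1 := by omega
        subst hjn
        by_cases h0 : m 1 = 0
        · rw [hR n, Finset.sum_eq_zero, sub_zero]
          · exact le_of_eq (hdeg h0 (n+1)).symm
          · intro j hj
            have hj' := Finset.mem_range.mp hj
            rw [show n+1-j = (n-j)+1 by omega, hdeg h0 (n-j), mul_zero]
        · have h1 : 0 < m 1 := (hmnonneg 1).lt_of_ne (Ne.symm h0)
          have hpos := hposall h1
          have key : (∑ j ∈ Finset.range (n+1), c j * m (n+1-j)) * m n ≤ m (n+1) * m (n+1) := by
            rw [Finset.sum_mul]
            calc ∑ j ∈ Finset.range (n+1), c j * m (n+1-j) * m n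
                ≤ ∑ j ∈ Finset.range (n+1), c j * m (n-j) * m (n+1) := by
                  refine Finset.sum_le_sum fun j hj => ?_
                  have hj' : j ≤ n := by
                    have := Finset.mem_range.mp hj; omega
                  have hsp := hspan hpos (n-j) j
                  rw [show n-j+1 = n+1-j by omega, show n-j+j = n by omega] at hsp
                  nlinarith [mul_le_mul_of_nonneg_left hsp (ih j hj')]
              _ = m (n+1) * m (n+1) := by rw [← Finset.sum_mul, ← hR' n]
          have hcs := hCS n
          rw [hR n]
          nlinarith [hpos n, key, hcs]
  obtain ⟨k, rfl⟩ : ∃ k, h = k + 1 := ⟨h - 1, by omega⟩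
  rw [← hcS (k+1) (by omega)]
  exact hmain (k+1) (k+1) le_rfl
end

section
/- Fix x ∈ [0,1] and define the sequence of functions q^h(y|x) on [0,1] by q⁰(y|x) = 1 and q^{h+1}(y|x) = x·y·q^h(y|x) + 1 − x·E[Y·q^h(Y|x)], where Y has law ρ on [0,1]. Then for all h ≥ 0, q^h(y|x) = 1 + Σ_{j=1}^{h} x^j·g^j(y), where g¹(y) = y − E[Y] and g^{j+1}(y) = y·g^j(y) − E[Y·g^j(Y)]. -/
/-! Induction on `h`. Substituting the expansion of `q^h` into its recursion and using linearity
of `f ↦ E[Y f(Y)]`, the coefficient of `x^(j+1)` is exactly the recursion defining `g^(j+1)`.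
Linearity is legitimate because every `g^j` is continuous and `ρ` lives on the compact `[0,1]`. -/

open MeasureTheory

theorem Finset.sum_Icc_one_add_one_eq {M : Type*} [AddCommMonoid M] (f : ℕ → M) (n : ℕ) :
    ∑ j ∈ Icc 1 (n + 1), f j = f 1 + ∑ j ∈ Icc 1 n, f (j + 1) := by
  rw [← Ico_add_one_right_eq_Icc, ← Ico_add_one_right_eq_Icc,
    sum_eq_sum_Ico_succ_bot (by omega), sum_Ico_add']

theorem ContinuousOn.integrable_of_ae_mem {X E : Type*} [MeasurableSpace X] [TopologicalSpace X]
    [OpensMeasurableSpace X] [T2Space X] [NormedAddCommGroup E] {μ : Measure X}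
    [IsFiniteMeasureOnCompacts μ] {K : Set X} {f : X → E} (hf : ContinuousOn f K)
    (hK : IsCompact K) (hμK : ∀ᵐ x ∂μ, x ∈ K) : Integrable f μ := by
  rw [← Measure.restrict_eq_self_of_ae_mem hμK]
  exact hf.integrableOn_compact hK

theorem continuous_of_eq_mul_sub {g : ℕ → ℝ → ℝ} {c : ℕ → ℝ} (hg1 : Continuous (g 1))
    (hrec : ∀ j, 1 ≤ j → ∀ y, g (j + 1) y = y * g j y - c j) :
    ∀ j, 1 ≤ j → Continuous (g j) := by
  refine Nat.le_induction hg1 fun j hj hgj => ?_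
  rw [funext (hrec j hj)]
  fun_prop

theorem integral_mul_one_add_sum {μ : Measure ℝ} (x : ℝ) (g : ℕ → ℝ → ℝ) (s : Finset ℕ)
    (hid : Integrable (fun z => z) μ) (hg : ∀ j ∈ s, Integrable (fun z => z * g j z) μ) :
    ∫ z, z * (1 + ∑ j ∈ s, x ^ j * g j z) ∂μ = ∫ z, z ∂μ + ∑ j ∈ s, x ^ j * ∫ z, z * g j z ∂μ := by
  have hgx : ∀ j ∈ s, Integrable (fun z => x ^ j * (z * g j z)) μ :=
    fun j hj => (hg j hj).const_mul _
  simp_rw [mul_add, mul_one, Finset.mul_sum, mul_left_comm _ (x ^ _)]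
  rw [integral_add hid (integrable_finsetSum _ hgx), integral_finsetSum _ hgx]
  simp_rw [integral_const_mul]

theorem stmt6_general (ρ : Measure ℝ) [IsProbabilityMeasure ρ]
    (hsupp : ∀ᵐ y ∂ρ, y ∈ Set.Icc (0:ℝ) 1)
    (x : ℝ)
    (g : ℕ → ℝ → ℝ)
    (hg1 : ∀ y, g 1 y = y - ∫ z, z ∂ρ)
    (hgrec : ∀ j : ℕ, 1 ≤ j → ∀ y, g (j+1) y = y * g j y - ∫ z, z * g j z ∂ρ)
    (q : ℕ → ℝ → ℝ)
    (hq0 : ∀ y, q 0 y = 1)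
    (hqrec : ∀ h : ℕ, ∀ y, q (h+1) y = x * y * q h y + 1 - x * ∫ z, z * q h z ∂ρ) :
    ∀ h : ℕ, ∀ y : ℝ, q h y = 1 + ∑ j ∈ Finset.Icc 1 h, x ^ j * g j y := by
  have hint {f : ℝ → ℝ} (hf : Continuous f) : Integrable f ρ :=
    hf.continuousOn.integrable_of_ae_mem isCompact_Icc hsupp
  have hg : ∀ j, 1 ≤ j → Continuous (g j) :=
    continuous_of_eq_mul_sub (c := fun j => ∫ z, z * g j z ∂ρ) (by rw [funext hg1]; fun_prop) hgrec
  intro h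
  induction h with
  | zero => simp [hq0]
  | succ n ih =>
    intro y
    have hmoment : ∫ z, z * q n z ∂ρ
        = ∫ z, z ∂ρ + ∑ j ∈ Finset.Icc 1 n, x ^ j * ∫ z, z * g j z ∂ρ := by
      simp_rw [ih]
      exact integral_mul_one_add_sum x g _ (hint continuous_id)
        fun j hj => hint (continuous_id.mul (hg j (Finset.mem_Icc.1 hj).1))
    have hshift : ∑ j ∈ Finset.Icc 1 n, x ^ (j + 1) * g (j + 1) y
        = x * y * ∑ j ∈ Finset.Icc 1 n, x ^ j * g j y
          - x * ∑ j ∈ Finset.Icc 1 n, x ^ j * ∫ z, z * g j z ∂ρ := by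
      rw [Finset.mul_sum, Finset.mul_sum, ← Finset.sum_sub_distrib]
      refine Finset.sum_congr rfl fun j hj => ?_
      rw [hgrec j (Finset.mem_Icc.1 hj).1]
      ring
    rw [hqrec, ih, hmoment, Finset.sum_Icc_one_add_one_eq, hshift, hg1]
    ring

theorem stmt6 (ρ : Measure ℝ) [IsProbabilityMeasure ρ]
    (hsupp : ∀ᵐ y ∂ρ, y ∈ Set.Icc (0:ℝ) 1)
    (x : ℝ) (hx : x ∈ Set.Icc (0:ℝ) 1)
    (g : ℕ → ℝ → ℝ)
    (hg1 : ∀ y, g 1 y = y - ∫ z, z ∂ρ)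
    (hgrec : ∀ j : ℕ, 1 ≤ j → ∀ y, g (j+1) y = y * g j y - ∫ z, z * g j z ∂ρ)
    (q : ℕ → ℝ → ℝ)
    (hq0 : ∀ y, q 0 y = 1)
    (hqrec : ∀ h : ℕ, ∀ y, q (h+1) y = x * y * q h y + 1 - x * ∫ z, z * q h z ∂ρ) :
    ∀ h : ℕ, ∀ y : ℝ, q h y = 1 + ∑ j ∈ Finset.Icc 1 h, x ^ j * g j y :=
  stmt6_general ρ hsupp x g hg1 hgrec q hq0 hqrec
end

section
/- Let Y be a random variable on [0,1], and define f^h recursively by f¹(y) = y − E[Y] and f^{h+1}(y) = (1−y)·f^h(y) + E[Y·f^h(Y)]. Setting Z = 1 − Y and φ^h(z) = −f^h(1−z), the sequence φ^h satisfies the recursion φ¹(z) = z − E[Z] and φ^{h+1}(z) = z·φ^h(z) − E[Z·φ^h(Z)]. Consequently E[Y·f^h(Y)] = E[Z·φ^h(Z)] ≥ 0 for all h ≥ 1. -/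
open MeasureTheory

/-- Single-crossing argument: if `-(g (1-z))` has at most one sign change
(from negative to positive) on `[0,1]`, witnessed by monotonicity of
`-(g(1-z))/z^n`, and `g` has mean zero, then `∫ y * g y ≥ 0`. -/
lemma crossing_aux (ρ : Measure ℝ) [IsProbabilityMeasure ρ]
    (hsupp : ∀ᵐ y ∂ρ, y ∈ Set.Icc (0:ℝ) 1)
    (g : ℝ → ℝ) (n : ℕ) (hgcont : Continuous g)
    (hint : ∀ G : ℝ → ℝ, Continuous G → Integrable G ρ)
    (h0 : -(g 1) ≤ 0)
    (hmono : ∀ z w : ℝ, 0 < z → z < w → w ≤ 1 →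
      (-(g (1-z))) * w^n ≤ (-(g (1-w))) * z^n)
    (hmean : ∫ y, g y ∂ρ = 0) :
    0 ≤ ∫ y, y * g y ∂ρ := by
  set S : Set ℝ := insert 0 {z | z ∈ Set.Icc (0:ℝ) 1 ∧ -(g (1-z)) < 0} with hS
  have hne : S.Nonempty := ⟨0, Or.inl rfl⟩
  have hbdd : BddAbove S := by
    refine ⟨1, ?_⟩
    rintro w (rfl | ⟨hw, _⟩)
    · norm_num
    · exact hw.2
  set t := sSup S with ht
  have key : ∀ z ∈ Set.Icc (0:ℝ) 1, 0 ≤ (z - t) * (-(g (1 - z))) := by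
    intro z hz
    rcases lt_trichotomy (-(g (1 - z))) 0 with hneg | hzero | hposz
    · have hzt : z ≤ t := le_csSup hbdd (Or.inr ⟨hz, hneg⟩)
      nlinarith
    · rw [hzero, mul_zero]
    · have htz : t ≤ z := by
        apply csSup_le hne
        rintro w (rfl | ⟨hw, hwneg⟩)
        · exact hz.1
        · by_contra hzw
          push_neg at hzw
          have hz0 : 0 < z := by
            rcases eq_or_lt_of_le hz.1 with h | h
            · exfalso; rw [← h, sub_zero] at hposz; linarith
            · exact h
          have hw0 : 0 < w := lt_trans hz0 hzw
          have hm := hmono z w hz0 hzw hw.2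
          have h1 : 0 < (-(g (1-z))) * w^n := mul_pos hposz (pow_pos hw0 n)
          have h2 : (-(g (1-w))) * z^n < 0 :=
            mul_neg_of_neg_of_pos hwneg (pow_pos hz0 n)
          linarith
      exact mul_nonneg (sub_nonneg.2 htz) (le_of_lt hposz)
  have h1 : 0 ≤ ∫ y, (y * g y - g y + t * g y) ∂ρ := by
    apply integral_nonneg_of_ae
    filter_upwards [hsupp] with y hy
    have hk := key (1 - y) ⟨by linarith [hy.2], by linarith [hy.1]⟩
    rw [sub_sub_cancel, show (1 - y - t) * -g y = y * g y - g y + t * g y from by ring] at hk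
    exact hk
  have hint1 : Integrable (fun y => y * g y) ρ := hint (fun y => y * g y) (continuous_id.mul hgcont)
  have hint2 : Integrable g ρ := hint _ hgcont
  have hint3 : Integrable (fun y => y * g y - g y) ρ :=
    hint (fun y => y * g y - g y) ((continuous_id.mul hgcont).sub hgcont)
  have hint4 : Integrable (fun y => t * g y) ρ :=
    hint (fun y => t * g y) (continuous_const.mul hgcont)
  have h2 : ∫ y, (y * g y - g y + t * g y) ∂ρ
      = (∫ y, y * g y ∂ρ) - (∫ y, g y ∂ρ) + t * ∫ y, g y ∂ρ := by
    rw [integral_add hint3 hint4, integral_sub hint1 hint2, integral_const_mul]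
  rw [h2, hmean] at h1
  linarith

theorem stmt7 (ρ : Measure ℝ) [IsProbabilityMeasure ρ]
    (hsupp : ∀ᵐ y ∂ρ, y ∈ Set.Icc (0:ℝ) 1)
    (f : ℕ → ℝ → ℝ)
    (hf1 : ∀ y, f 1 y = y - ∫ z, z ∂ρ)
    (hfrec : ∀ h : ℕ, 1 ≤ h → ∀ y,
      f (h+1) y = (1 - y) * f h y + ∫ z, z * f h z ∂ρ)
    (φ : ℕ → ℝ → ℝ)
    (hφ : ∀ h : ℕ, ∀ z : ℝ, φ h z = -(f h (1 - z))) :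
    (∀ z : ℝ, φ 1 z = z - ∫ y, (1 - y) ∂ρ) ∧
    (∀ h : ℕ, 1 ≤ h → ∀ z : ℝ,
      φ (h+1) z = z * φ h z - ∫ y, (1 - y) * φ h (1 - y) ∂ρ) ∧
    (∀ h : ℕ, 1 ≤ h →
      (∫ y, y * f h y ∂ρ) = (∫ y, (1 - y) * φ h (1 - y) ∂ρ) ∧
      0 ≤ ∫ y, y * f h y ∂ρ) := by
  have hy_int : Integrable (fun y : ℝ => y) ρ := by
    refine (integrable_const (1:ℝ)).mono' measurable_id.aestronglyMeasurable ?_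
    filter_upwards [hsupp] with y hy
    rw [Real.norm_eq_abs, abs_le]
    exact ⟨by linarith [hy.1], hy.2⟩
  have hint : ∀ G : ℝ → ℝ, Continuous G → Integrable G ρ := by
    intro G hG
    obtain ⟨C, hC⟩ := isCompact_Icc.exists_bound_of_continuousOn
      (hG.continuousOn : ContinuousOn G (Set.Icc (0:ℝ) 1))
    exact (integrable_const C).mono' hG.aestronglyMeasurable
      (by filter_upwards [hsupp] with y hy; exact hC y hy)
  have hμ0 : 0 ≤ ∫ y, y ∂ρ := by
    apply integral_nonneg_of_ae
    filter_upwards [hsupp] with y hy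
    exact hy.1
  have hμ1 : ∫ y, y ∂ρ ≤ 1 := by
    have := integral_mono_ae hy_int (integrable_const (1:ℝ))
      (by filter_upwards [hsupp] with y hy; exact hy.2)
    simpa using this
  have hcont : ∀ h, 1 ≤ h → Continuous (f h) := by
    intro h
    induction h with
    | zero => intro h0; exact absurd h0 (by omega)
    | succ n ih =>
      intro _
      by_cases hn : n = 0
      · subst hn
        rw [show f 1 = fun y => y - ∫ z, z ∂ρ from funext hf1]
        exact continuous_id.sub continuous_const
      · have hn1 : 1 ≤ n := by omega
        rw [show f (n+1) = fun y => (1 - y) * f n y + ∫ z, z * f n z ∂ρ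
          from funext (hfrec n hn1)]
        exact ((continuous_const.sub continuous_id).mul (ih hn1)).add continuous_const
  have hmean : ∀ h, 1 ≤ h → ∫ y, f h y ∂ρ = 0 := by
    intro h
    induction h with
    | zero => intro h0; exact absurd h0 (by omega)
    | succ n ih =>
      intro _
      by_cases hn : n = 0
      · subst hn
        simp only [hf1]
        rw [integral_sub hy_int (integrable_const _), integral_const]
        simp
      · have hn1 : 1 ≤ n := by omega
        simp only [hfrec n hn1]
        have e : (fun y => (1 - y) * f n y) = fun y => f n y - y * f n y := by
          funext y; ring
        rw [integral_add (hint (fun y => (1 - y) * f n y)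
              ((continuous_const.sub continuous_id).mul (hcont n hn1)))
            (integrable_const _), integral_const, e,
          integral_sub (hint _ (hcont n hn1))
            (hint (fun y => y * f n y) (continuous_id.mul (hcont n hn1))),
          ih hn1]
        simp
  have hE0 : ∀ h, 1 ≤ h →
      ∫ y, (1 - y) * -(f h (1 - (1 - y))) ∂ρ = ∫ y, y * f h y ∂ρ := by
    intro h hh
    have e : (fun y => (1 - y) * -(f h (1 - (1 - y)))) = fun y => y * f h y - f h y := by
      funext y; rw [sub_sub_cancel]; ring
    rw [e, integral_sub (hint (fun y => y * f h y) (continuous_id.mul (hcont h hh)))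
      (hint _ (hcont h hh)), hmean h hh, sub_zero]
  have hpos : ∀ h, 1 ≤ h → (-(f h 1) ≤ 0) →
      (∀ z w : ℝ, 0 < z → z < w → w ≤ 1 →
        (-(f h (1-z))) * w^h ≤ (-(f h (1-w))) * z^h) →
      0 ≤ ∫ y, y * f h y ∂ρ :=
    fun h hh h0 hmono =>
      crossing_aux ρ hsupp (f h) h (hcont h hh) hint h0 hmono (hmean h hh)
  have hkey : ∀ h, 1 ≤ h → (-(f h 1) ≤ 0 ∧ ∀ z w : ℝ, 0 < z → z < w → w ≤ 1 →
      (-(f h (1-z))) * w^h ≤ (-(f h (1-w))) * z^h) := by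
    intro h
    induction h with
    | zero => intro h0; exact absurd h0 (by omega)
    | succ n ih =>
      intro _
      by_cases hn : n = 0
      · subst hn
        constructor
        · rw [hf1]; linarith
        · intro z w hz hzw hw1
          rw [hf1, hf1]
          simp only [zero_add, pow_one]
          nlinarith [mul_le_mul_of_nonneg_left hzw.le (by linarith : (0:ℝ) ≤ 1 - ∫ z, z ∂ρ)]
      · have hn1 : 1 ≤ n := by omega
        obtain ⟨h0n, hmonon⟩ := ih hn1
        have hcn : 0 ≤ ∫ y, y * f n y ∂ρ := hpos n hn1 h0n hmonon
        constructor
        · rw [hfrec n hn1 1]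
          have e0 : ((1:ℝ) - 1) * f n 1 = 0 := by ring
          rw [e0, zero_add]
          linarith [hcn]
        · intro z w hz hzw hw1
          rw [hfrec n hn1 (1 - z), hfrec n hn1 (1 - w),
            show (1:ℝ) - (1 - z) = z from by ring,
            show (1:ℝ) - (1 - w) = w from by ring]
          have hw0 : 0 < w := lt_trans hz hzw
          have ihm := hmonon z w hz hzw hw1
          have hzw' : z^(n+1) ≤ w^(n+1) := pow_le_pow_left₀ hz.le hzw.le (n+1)
          have key1 : z * (-(f n (1-z))) * w^(n+1) ≤ w * (-(f n (1-w))) * z^(n+1) := by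
            calc z * (-(f n (1-z))) * w^(n+1)
                = (z*w) * ((-(f n (1-z))) * w^n) := by rw [pow_succ]; ring
              _ ≤ (z*w) * ((-(f n (1-w))) * z^n) :=
                  mul_le_mul_of_nonneg_left ihm (le_of_lt (mul_pos hz hw0))
              _ = w * (-(f n (1-w))) * z^(n+1) := by rw [pow_succ]; ring
          nlinarith [key1, mul_le_mul_of_nonneg_left hzw' hcn]
  refine ⟨?_, ?_, ?_⟩
  · intro z
    rw [hφ, hf1]
    have e : ∫ y, (1 - y) ∂ρ = 1 - ∫ y, y ∂ρ := by
      rw [integral_sub (integrable_const 1) hy_int]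
      simp
    rw [e]; ring
  · intro h hh z
    simp only [hφ]
    rw [hE0 h hh, hfrec h hh (1 - z), show (1:ℝ) - (1 - z) = z from by ring]
    ring
  · intro h hh
    obtain ⟨h0, hmono⟩ := hkey h hh
    refine ⟨?_, hpos h hh h0 hmono⟩
    simp only [hφ]
    exact (hE0 h hh).symm
end

section
/- Suppose for each k ≥ 0 the per-round reward differences satisfy Δr^{k,k} = −c, Δr^{k,k+1} ≥ b·V, and Δr^{k,h} ≥ 0 for all h > k+1, where b, c > 0 and V ≥ 0. Then the total episodic reward difference ΔG(H) = Σ_{k=0}^{H−1} Σ_{h=k}^{H−1} Δr^{k,h} satisfies ΔG(H) ≥ (H−1)·(b·V − c) − c for every H ≥ 2. In particular, if b·V − 2c > 0 (the H = 2 condition), then ΔG(H) > 0 and the lower bound is nondecreasing in H. -/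
open Finset

theorem add_le_sum_Icc_of_nonneg {f : ℕ → ℝ} {k m : ℕ} (hkm : k + 1 ≤ m)
    (htail : ∀ h, k + 1 < h → 0 ≤ f h) :
    f k + f (k + 1) ≤ ∑ h ∈ Icc k m, f h := by
  rw [← insert_Icc_add_one_left_eq_Icc (by omega : k ≤ m), sum_insert (by simp),
    ← insert_Icc_add_one_left_eq_Icc hkm, sum_insert (by simp), ← add_assoc]
  refine le_add_of_nonneg_right (sum_nonneg fun h hh => htail h ?_)
  have := (mem_Icc.mp hh).1
  omega

section Episode

variable {c d : ℝ} {Δr : ℕ → ℕ → ℝ}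

theorem le_sum_Icc_of_round (hdiag : ∀ k, Δr k k = -c) (hnext : ∀ k, d ≤ Δr k (k + 1))
    (hpos : ∀ k h, k + 1 < h → 0 ≤ Δr k h) {k m : ℕ} (hkm : k + 1 ≤ m) :
    d - c ≤ ∑ h ∈ Icc k m, Δr k h := by
  have := add_le_sum_Icc_of_nonneg (f := Δr k) hkm (hpos k)
  linarith [hdiag k, hnext k]

/-- The last round contributes only its cost `-c`; each earlier round contributes at least
`d - c`. -/
theorem episode_lower_bound (hdiag : ∀ k, Δr k k = -c) (hnext : ∀ k, d ≤ Δr k (k + 1))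
    (hpos : ∀ k h, k + 1 < h → 0 ≤ Δr k h) {H : ℕ} (hH : 2 ≤ H) :
    ((H : ℝ) - 1) * (d - c) - c ≤ ∑ k ∈ range H, ∑ h ∈ Icc k (H - 1), Δr k h := by
  obtain ⟨n, rfl⟩ : ∃ n, H = n + 1 := ⟨H - 1, by omega⟩
  have hrounds : ∑ _k ∈ range n, (d - c) ≤ ∑ k ∈ range n, ∑ h ∈ Icc k n, Δr k h :=
    sum_le_sum fun k hk => le_sum_Icc_of_round hdiag hnext hpos (mem_range.mp hk)
  rw [sum_const, card_range, nsmul_eq_mul] at hrounds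
  simp only [Nat.add_sub_cancel, sum_range_succ, Icc_self, sum_singleton, hdiag]
  push_cast
  linarith

end Episode

theorem stmt17_general (b c V : ℝ) (hc : 0 < c)
    (Δr : ℕ → ℕ → ℝ)
    (hdiag : ∀ k, Δr k k = -c)
    (hnext : ∀ k, b * V ≤ Δr k (k+1))
    (hpos : ∀ k h, k + 1 < h → 0 ≤ Δr k h) :
    (∀ H : ℕ, 2 ≤ H →
      ((H : ℝ) - 1) * (b * V - c) - c
        ≤ ∑ k ∈ Finset.range H, ∑ h ∈ Finset.Icc k (H-1), Δr k h) ∧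
    (0 < b * V - 2 * c →
      (∀ H : ℕ, 2 ≤ H →
        0 < ∑ k ∈ Finset.range H, ∑ h ∈ Finset.Icc k (H-1), Δr k h) ∧
      (∀ H₁ H₂ : ℕ, 2 ≤ H₁ → H₁ ≤ H₂ →
        ((H₁ : ℝ) - 1) * (b * V - c) - c
          ≤ ((H₂ : ℝ) - 1) * (b * V - c) - c)) := by
  have hbound := fun H (hH : 2 ≤ H) => episode_lower_bound hdiag hnext hpos hH
  refine ⟨hbound, fun hgain => ⟨fun H hH => ?_, fun H₁ H₂ hH₁ h12 => ?_⟩⟩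
  · have hH' : (2 : ℝ) ≤ H := by exact_mod_cast hH
    -- the bound at `H` is at least its value `b * V - 2 * c` at `H = 2`
    nlinarith [hbound H hH]
  · have : (H₁ : ℝ) ≤ H₂ := by exact_mod_cast h12
    nlinarith

theorem stmt17 (b c V : ℝ) (hb : 0 < b) (hc : 0 < c) (hV : 0 ≤ V)
    (Δr : ℕ → ℕ → ℝ)
    (hdiag : ∀ k, Δr k k = -c)
    (hnext : ∀ k, b * V ≤ Δr k (k+1))
    (hpos : ∀ k h, k + 1 < h → 0 ≤ Δr k h) :
    (∀ H : ℕ, 2 ≤ H →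
      ((H : ℝ) - 1) * (b * V - c) - c
        ≤ ∑ k ∈ Finset.range H, ∑ h ∈ Finset.Icc k (H-1), Δr k h) ∧
    (0 < b * V - 2 * c →
      (∀ H : ℕ, 2 ≤ H →
        0 < ∑ k ∈ Finset.range H, ∑ h ∈ Finset.Icc k (H-1), Δr k h) ∧
      (∀ H₁ H₂ : ℕ, 2 ≤ H₁ → H₁ ≤ H₂ →
        ((H₁ : ℝ) - 1) * (b * V - c) - c
          ≤ ((H₂ : ℝ) - 1) * (b * V - c) - c)) :=
  stmt17_general b c V hc Δr hdiag hnext hpos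
end
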